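/- arXiv:2510.13083 — 3 statements merged into one kernel-verified Lean document; each statement's English description precedes it below -/
import Mathlib

section
/- Let Q = {x ∈ ℝⁿ : Ax ≤ b} be a nonempty polyhedron, let z be a vertex of Q and let x ∈ Q with x ≠ z. Then N(x) ∩ N(z) is a cone whose dimension is strictly less than n, and moreover N(x) ∩ int N(z) = ∅, where int denotes the topological interior in ℝⁿ. -/
open Set RealInnerProductSpace

noncomputable section

/-- Normal cone of a convex set `Q` at a point `z`. -/
def normalCone {n : ℕ} (Q : Set (EuclideanSpace ℝ (Fin n))) (z : EuclideanSpace ℝ (Fin n)) :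
    Set (EuclideanSpace ℝ (Fin n)) :=
  {v | ∀ y ∈ Q, ⟪v, y - z⟫ ≤ 0}

/-!
If `x ≠ z` both lie in `Q`, every `v ∈ N(x) ∩ N(z)` satisfies `⟪v, x - z⟫ ≤ 0` and
`⟪v, z - x⟫ ≤ 0`, so `N(x) ∩ N(z)` lies in the hyperplane `(x - z)ᗮ`. If moreover `v` is
interior to `N(z)`, then `v + t (x - z) ∈ N(z)` for small `t > 0`, which forces
`⟪v, x - z⟫ < 0`, contradicting `v ∈ N(x)`.
-/

open Filter Topology

section NormalCone

variable {n : ℕ} {Q : Set (EuclideanSpace ℝ (Fin n))} {x z v : EuclideanSpace ℝ (Fin n)}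

lemma inner_sub_nonneg_of_mem_normalCone (hv : v ∈ normalCone Q x) (hz : z ∈ Q) :
    0 ≤ ⟪v, x - z⟫ := by
  have h := hv z hz
  rw [← neg_sub, inner_neg_right] at h
  linarith

lemma inner_sub_eq_zero_of_mem_normalCone_inter (hx : x ∈ Q) (hz : z ∈ Q)
    (hv : v ∈ normalCone Q x ∩ normalCone Q z) : ⟪v, x - z⟫ = 0 :=
  le_antisymm (hv.2 x hx) (inner_sub_nonneg_of_mem_normalCone hv.1 hz)

lemma span_normalCone_inter_le_orthogonal (hx : x ∈ Q) (hz : z ∈ Q) :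
    Submodule.span ℝ (normalCone Q x ∩ normalCone Q z) ≤ (ℝ ∙ (x - z))ᗮ :=
  Submodule.span_le.2 fun _ hv ↦ Submodule.mem_orthogonal_singleton_iff_inner_left.2
    (inner_sub_eq_zero_of_mem_normalCone_inter hx hz hv)

lemma finrank_span_normalCone_inter_lt (hx : x ∈ Q) (hz : z ∈ Q) (hxz : x ≠ z) :
    Module.finrank ℝ (Submodule.span ℝ (normalCone Q x ∩ normalCone Q z)) < n := by
  have hne_top : (ℝ ∙ (x - z))ᗮ ≠ ⊤ := fun h ↦ by
    have hmem : x - z ∈ (ℝ ∙ (x - z))ᗮ := h ▸ Submodule.mem_top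
    rw [Submodule.mem_orthogonal_singleton_iff_inner_left, inner_self_eq_zero,
      sub_eq_zero] at hmem
    exact hxz hmem
  calc Module.finrank ℝ (Submodule.span ℝ (normalCone Q x ∩ normalCone Q z))
      ≤ Module.finrank ℝ (ℝ ∙ (x - z))ᗮ :=
        Submodule.finrank_mono (span_normalCone_inter_le_orthogonal hx hz)
    _ < Module.finrank ℝ (EuclideanSpace ℝ (Fin n)) := Submodule.finrank_lt hne_top
    _ = n := finrank_euclideanSpace_fin

lemma inner_sub_neg_of_mem_interior_normalCone (hv : v ∈ interior (normalCone Q z))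
    (hx : x ∈ Q) (hxz : x ≠ z) : ⟪v, x - z⟫ < 0 := by
  have hline : Tendsto (fun t : ℝ ↦ v + t • (x - z)) (𝓝 0) (𝓝 v) := by
    simpa using tendsto_const_nhds.add ((tendsto_id (x := 𝓝 (0 : ℝ))).smul_const (x - z))
  have hev : ∀ᶠ t in 𝓝[>] (0 : ℝ), v + t • (x - z) ∈ normalCone Q z :=
    nhdsWithin_le_nhds <| hline.eventually (mem_interior_iff_mem_nhds.1 hv)
  obtain ⟨t, hmem, ht⟩ := (hev.and self_mem_nhdsWithin).exists
  have hle : ⟪v, x - z⟫ + t * ‖x - z‖ ^ 2 ≤ 0 := by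
    simpa [inner_add_left, real_inner_smul_left, real_inner_self_eq_norm_sq] using hmem x hx
  have hpos : 0 < t * ‖x - z‖ ^ 2 := mul_pos ht (pow_pos (norm_pos_iff.2 (sub_ne_zero.2 hxz)) 2)
  linarith

lemma normalCone_inter_interior_normalCone_eq_empty (hx : x ∈ Q) (hz : z ∈ Q) (hxz : x ≠ z) :
    normalCone Q x ∩ interior (normalCone Q z) = ∅ :=
  eq_empty_iff_forall_notMem.2 fun _ ⟨hvx, hvz⟩ ↦
    (inner_sub_neg_of_mem_interior_normalCone hvz hx hxz).not_ge
      (inner_sub_nonneg_of_mem_normalCone hvx hz)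

end NormalCone

theorem stmt1_general {n : ℕ}
    (Q : Set (EuclideanSpace ℝ (Fin n)))
    (z x : EuclideanSpace ℝ (Fin n))
    (hz : z ∈ Set.extremePoints ℝ Q) (hx : x ∈ Q) (hxz : x ≠ z) :
    Module.finrank ℝ (Submodule.span ℝ (normalCone Q x ∩ normalCone Q z)) < n ∧
    normalCone Q x ∩ interior (normalCone Q z) = ∅ :=
  ⟨finrank_span_normalCone_inter_lt hx hz.1 hxz,
    normalCone_inter_interior_normalCone_eq_empty hx hz.1 hxz⟩

/-- If `z` is a vertex of the polyhedron `Q` and `x ∈ Q`, `x ≠ z`, then `N(x) ∩ N(z)` has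
dimension `< n` and `N(x)` misses the interior of `N(z)`. -/
theorem stmt1 {n m : ℕ} (A : Fin m → EuclideanSpace ℝ (Fin n)) (b : Fin m → ℝ)
    (Q : Set (EuclideanSpace ℝ (Fin n)))
    (hQ : Q = {x | ∀ i, ⟪A i, x⟫ ≤ b i}) (hne : Q.Nonempty)
    (z x : EuclideanSpace ℝ (Fin n))
    (hz : z ∈ Set.extremePoints ℝ Q) (hx : x ∈ Q) (hxz : x ≠ z) :
    Module.finrank ℝ (Submodule.span ℝ (normalCone Q x ∩ normalCone Q z)) < n ∧
    normalCone Q x ∩ interior (normalCone Q z) = ∅ :=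
  stmt1_general Q z x hz hx hxz
end
end

section
/- Let Q = {x ∈ ℝⁿ : Ax ≤ b} be a nonempty polyhedron, z ∈ vrt(Q), ε ≥ 0, and set T = N(z). Let ψ : ℝⁿ → (−∞, ∞] be proper convex. For any w ∈ ∂(εψ)(z) ∩ T, γ(T ∩ [T + ∂(εψ)(z)]) ≥ γ(T) · exp(−½‖w‖² − ‖w‖√n). Moreover, if ψ is differentiable at z, then γ(T ∩ [T + ε∇ψ(z)]) ≤ γ(T) · exp(−½‖proj_{T*}(ε∇ψ(z))‖² + dist(ε∇ψ(z), T*)·√n). -/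
open MeasureTheory Set Metric Pointwise RealInnerProductSpace

noncomputable section

/-- Standard Gaussian measure of a set in `ℝⁿ`. -/
def gauss {n : ℕ} (B : Set (EuclideanSpace ℝ (Fin n))) : ℝ :=
  ∫ x in B, (2 * Real.pi) ^ (-(n : ℝ) / 2) * Real.exp (-‖x‖ ^ 2 / 2)

/-- Dual cone of a set. -/
def dualCone {n : ℕ} (V : Set (EuclideanSpace ℝ (Fin n))) : Set (EuclideanSpace ℝ (Fin n)) :=
  {y | ∀ x ∈ V, 0 ≤ ⟪x, y⟫}

/-- Subdifferential at `z` of the proper convex function equal to `ψ` on `D` and `+∞` off `D`. -/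
def subdiff {n : ℕ} (D : Set (EuclideanSpace ℝ (Fin n))) (ψ : EuclideanSpace ℝ (Fin n) → ℝ)
    (z : EuclideanSpace ℝ (Fin n)) : Set (EuclideanSpace ℝ (Fin n)) :=
  {w | z ∈ D ∧ ∀ y ∈ D, ψ z + ⟪w, y - z⟫ ≤ ψ y}

/-- `∂(εψ)(z)`: equals `ε ∂ψ(z)` for `ε > 0` and the normal cone of `dom ψ = D` at `z`
for `ε = 0`. -/
def subdiffScaled {n : ℕ} (ε : ℝ) (D : Set (EuclideanSpace ℝ (Fin n)))
    (ψ : EuclideanSpace ℝ (Fin n) → ℝ) (z : EuclideanSpace ℝ (Fin n)) :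
    Set (EuclideanSpace ℝ (Fin n)) :=
  if ε = 0 then {w | z ∈ D ∧ ∀ y ∈ D, ⟪w, y - z⟫ ≤ 0}
  else (fun w => ε • w) '' subdiff D ψ z

/-!
On a cone `T`, rescaling gives `∫_T exp (-c‖x‖²/2) = c^(-n/2) ∫_T exp (-‖x‖²/2)`. Both estimates
come from comparing the translated density `exp (-‖x + w‖²/2)` pointwise with such a rescaled
density, using the AM-GM bound `2a‖x‖ ≤ a r + (a/r)‖x‖²` with `r = √n` (lower bound) or
`r = √n + a` (upper bound), and then `(1 + δ)^(n/2) ≤ exp (δ n/2)`. For the upper bound, the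
nearest point `p` of `T*` to `u = ε∇ψ(z)` satisfies `⟪p, u - p⟫ = 0` and `⟪x, p⟫ ≥ 0` on `T`, so
`‖x + u‖² ≥ ‖p‖² + ‖x + (u - p)‖²`, which splits off the factor `exp (-‖p‖²/2)`.
-/
open Real Module

lemma two_mul_mul_le_mul_add_div_mul_sq {a r : ℝ} (ha : 0 ≤ a) (hr : 0 < r) (ρ : ℝ) :
    2 * a * ρ ≤ a * r + a / r * ρ ^ 2 := by
  have hsq : 0 ≤ a / r * (ρ - r) ^ 2 := by positivity
  have hexpand : a / r * (ρ - r) ^ 2 = a / r * ρ ^ 2 - 2 * a * ρ + a * r := by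
    field_simp
    ring
  linarith

lemma one_add_rpow_le_exp_mul {δ r : ℝ} (hδ : -1 ≤ δ) (hr : 0 ≤ r) :
    (1 + δ) ^ r ≤ exp (δ * r) := by
  rw [exp_mul]
  exact rpow_le_rpow (by linarith) (by linarith [add_one_le_exp δ]) hr

lemma PointedCone.inner_sub_eq_zero_of_forall_dist_le {F : Type*} [NormedAddCommGroup F]
    [InnerProductSpace ℝ F] (K : PointedCone ℝ F) {u p : F} (hp : p ∈ K)
    (hmin : ∀ a ∈ K, dist u p ≤ dist u a) : ⟪p, u - p⟫ = 0 := by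
  have hproj : ‖u - p‖ = ⨅ a : K, ‖u - a‖ :=
    le_antisymm (le_ciInf fun a => by simpa only [dist_eq_norm] using hmin a a.2)
      (ciInf_le ⟨0, Set.forall_mem_range.2 fun _ => norm_nonneg _⟩ (⟨p, hp⟩ : K))
  have hvar := (norm_eq_iInf_iff_real_inner_le_zero K.convex hp).1 hproj
  have h0 := hvar 0 K.zero_mem
  have h2 := hvar ((2 : ℝ) • p) (K.smul_mem zero_le_two hp)
  rw [zero_sub, inner_neg_right] at h0
  rw [two_smul, add_sub_cancel_right] at h2
  rw [real_inner_comm]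
  linarith

lemma smul_set_eq_self_of_cone {M : Type*} [AddCommGroup M] [Module ℝ M] {T : Set M}
    (hT : ∀ t : ℝ, 0 < t → ∀ x ∈ T, t • x ∈ T) {t : ℝ} (ht : 0 < t) : t • T = T :=
  Set.ext fun x => ⟨by rintro ⟨y, hy, rfl⟩; exact hT t ht y hy,
    fun hx => (mem_smul_set_iff_inv_smul_mem₀ ht.ne' _ _).2 (hT _ (inv_pos.2 ht) x hx)⟩

section GaussianCone

variable {E : Type*} [NormedAddCommGroup E] [InnerProductSpace ℝ E] [FiniteDimensional ℝ E]
  [MeasurableSpace E] [BorelSpace E] {T : Set E}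

lemma integrable_exp_neg_mul_sq_norm {c : ℝ} (hc : 0 < c) :
    Integrable fun x : E => exp (-c * ‖x‖ ^ 2 / 2) := by
  have h := (GaussianFourier.integrable_cexp_neg_mul_sq_norm_add (V := E)
    (b := ((c / 2 : ℝ) : ℂ)) (by simpa using by positivity) 0 0).norm
  refine h.congr (.of_forall fun x => ?_)
  simp only [Complex.norm_exp, zero_mul, add_zero, Complex.neg_re, Complex.mul_re,
    Complex.ofReal_re, Complex.ofReal_im, ← Complex.ofReal_pow, zero_mul]
  ring_nf

lemma integrable_exp_neg_sq_norm : Integrable fun x : E => exp (-‖x‖ ^ 2 / 2) := by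
  simpa using integrable_exp_neg_mul_sq_norm (E := E) one_pos

lemma setIntegral_exp_neg_mul_sq_norm_of_cone (hT : ∀ t : ℝ, 0 < t → ∀ x ∈ T, t • x ∈ T)
    {c : ℝ} (hc : 0 < c) :
    ∫ x in T, exp (-c * ‖x‖ ^ 2 / 2) =
      c ^ (-(finrank ℝ E : ℝ) / 2) * ∫ x in T, exp (-‖x‖ ^ 2 / 2) := by
  have hk : 0 < √c := sqrt_pos.2 hc
  calc ∫ x in T, exp (-c * ‖x‖ ^ 2 / 2) = ∫ x in T, exp (-‖√c • x‖ ^ 2 / 2) := by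
        simp_rw [norm_smul, mul_pow, norm_of_nonneg hk.le, sq_sqrt hc.le, neg_mul]
    _ = (√c ^ finrank ℝ E)⁻¹ • ∫ x in √c • T, exp (-‖x‖ ^ 2 / 2) :=
        Measure.setIntegral_comp_smul_of_pos _ (fun x => exp (-‖x‖ ^ 2 / 2)) T hk
    _ = _ := by
        rw [smul_set_eq_self_of_cone hT hk, smul_eq_mul, sqrt_eq_rpow, ← rpow_natCast,
          ← rpow_mul hc.le, ← rpow_neg hc.le]
        congr 2
        ring

lemma exp_mul_setIntegral_le_setIntegral_exp_neg_sq_norm_add (hTm : MeasurableSet T)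
    (hT : ∀ t : ℝ, 0 < t → ∀ x ∈ T, t • x ∈ T) (w : E) :
    exp (-‖w‖ ^ 2 / 2 - ‖w‖ * √(finrank ℝ E)) * ∫ x in T, exp (-‖x‖ ^ 2 / 2) ≤
      ∫ x in T, exp (-‖x + w‖ ^ 2 / 2) := by
  rcases (finrank ℝ E).eq_zero_or_pos with hn | hn
  · have := finrank_zero_iff.1 hn
    simp [Subsingleton.elim w 0]
  set s := ‖w‖
  set r := √(finrank ℝ E : ℝ)
  have hr : 0 < r := sqrt_pos.2 (by exact_mod_cast hn)
  have hs : 0 ≤ s := norm_nonneg w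
  have hpoint : ∀ x : E, exp (-s ^ 2 / 2 - s * r / 2) * exp (-(1 + s / r) * ‖x‖ ^ 2 / 2) ≤
      exp (-‖x + w‖ ^ 2 / 2) := by
    intro x
    rw [← exp_add, exp_le_exp]
    nlinarith [two_mul_mul_le_mul_add_div_mul_sq hs hr ‖x‖, norm_add_sq_real x w,
      real_inner_le_norm x w]
  have hvol : exp (-(s * r / 2)) ≤ (1 + s / r) ^ (-(finrank ℝ E : ℝ) / 2) := by
    have hnr : (finrank ℝ E : ℝ) = r ^ 2 := (sq_sqrt (Nat.cast_nonneg _)).symm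
    rw [neg_div, rpow_neg (by positivity), exp_neg]
    refine inv_anti₀ (by positivity) ((one_add_rpow_le_exp_mul (by linarith [div_nonneg hs hr.le])
      (by positivity)).trans_eq ?_)
    rw [hnr]
    field_simp
  calc exp (-s ^ 2 / 2 - s * r) * ∫ x in T, exp (-‖x‖ ^ 2 / 2)
      = exp (-s ^ 2 / 2 - s * r / 2) * exp (-(s * r / 2)) * ∫ x in T, exp (-‖x‖ ^ 2 / 2) := by
        rw [← exp_add]; ring_nf
    _ ≤ exp (-s ^ 2 / 2 - s * r / 2) * (1 + s / r) ^ (-(finrank ℝ E : ℝ) / 2) *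
          ∫ x in T, exp (-‖x‖ ^ 2 / 2) := by
        gcongr
    _ = ∫ x in T, exp (-s ^ 2 / 2 - s * r / 2) * exp (-(1 + s / r) * ‖x‖ ^ 2 / 2) := by
        rw [integral_const_mul, setIntegral_exp_neg_mul_sq_norm_of_cone hT (by positivity)]
        ring
    _ ≤ ∫ x in T, exp (-‖x + w‖ ^ 2 / 2) :=
        setIntegral_mono_on
          ((integrable_exp_neg_mul_sq_norm (by positivity)).const_mul _).integrableOn
          (integrable_exp_neg_sq_norm.comp_add_right w).integrableOn hTm fun x _ => hpoint x

lemma setIntegral_exp_neg_sq_norm_add_le (hTm : MeasurableSet T)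
    (hT : ∀ t : ℝ, 0 < t → ∀ x ∈ T, t • x ∈ T) (q : E) :
    ∫ x in T, exp (-‖x + q‖ ^ 2 / 2) ≤
      exp (‖q‖ * √(finrank ℝ E)) * ∫ x in T, exp (-‖x‖ ^ 2 / 2) := by
  rcases (finrank ℝ E).eq_zero_or_pos with hn | hn
  · have := finrank_zero_iff.1 hn
    simp [Subsingleton.elim q 0]
  set d := ‖q‖
  set r := √(finrank ℝ E : ℝ)
  have hr : 0 < r := sqrt_pos.2 (by exact_mod_cast hn)
  have hd : 0 ≤ d := norm_nonneg q
  have hc : (1 + d / r)⁻¹ = 1 - d / (r + d) := by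
    field_simp
    ring
  have hpoint : ∀ x : E, exp (-‖x + q‖ ^ 2 / 2) ≤
      exp (d * r / 2) * exp (-(1 + d / r)⁻¹ * ‖x‖ ^ 2 / 2) := by
    intro x
    rw [← exp_add, exp_le_exp, hc]
    nlinarith [two_mul_mul_le_mul_add_div_mul_sq hd (by positivity : 0 < r + d) ‖x‖,
      norm_add_sq_real x q, neg_le_of_abs_le (abs_real_inner_le_norm x q)]
  have hvol : (1 + d / r)⁻¹ ^ (-(finrank ℝ E : ℝ) / 2) ≤ exp (d * r / 2) := by
    have hnr : (finrank ℝ E : ℝ) = r ^ 2 := (sq_sqrt (Nat.cast_nonneg _)).symm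
    rw [inv_rpow (by positivity), neg_div, rpow_neg (by positivity), inv_inv]
    refine (one_add_rpow_le_exp_mul (by linarith [div_nonneg hd hr.le])
      (by positivity)).trans_eq ?_
    rw [hnr]
    field_simp
  calc ∫ x in T, exp (-‖x + q‖ ^ 2 / 2)
      ≤ ∫ x in T, exp (d * r / 2) * exp (-(1 + d / r)⁻¹ * ‖x‖ ^ 2 / 2) :=
        setIntegral_mono_on (integrable_exp_neg_sq_norm.comp_add_right q).integrableOn
          ((integrable_exp_neg_mul_sq_norm (by positivity)).const_mul _).integrableOn
          hTm fun x _ => hpoint x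
    _ = exp (d * r / 2) * (1 + d / r)⁻¹ ^ (-(finrank ℝ E : ℝ) / 2) *
          ∫ x in T, exp (-‖x‖ ^ 2 / 2) := by
        rw [integral_const_mul, setIntegral_exp_neg_mul_sq_norm_of_cone hT (by positivity)]
        ring
    _ ≤ exp (d * r / 2) * exp (d * r / 2) * ∫ x in T, exp (-‖x‖ ^ 2 / 2) := by
        gcongr
    _ = exp (d * r) * ∫ x in T, exp (-‖x‖ ^ 2 / 2) := by
        rw [← exp_add]; ring_nf

lemma setIntegral_exp_neg_sq_norm_add_le_of_inner_eq_zero (hTm : MeasurableSet T) {p u : E}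
    (hp : ∀ x ∈ T, 0 ≤ ⟪x, p⟫) (horth : ⟪p, u - p⟫ = 0) :
    ∫ x in T, exp (-‖x + u‖ ^ 2 / 2) ≤
      exp (-‖p‖ ^ 2 / 2) * ∫ x in T, exp (-‖x + (u - p)‖ ^ 2 / 2) := by
  rw [← integral_const_mul]
  refine setIntegral_mono_on (integrable_exp_neg_sq_norm.comp_add_right u).integrableOn
    ((integrable_exp_neg_sq_norm.comp_add_right (u - p)).const_mul _).integrableOn hTm
    fun x hx => ?_
  have hsplit : ‖x + u‖ ^ 2 = ‖x + (u - p)‖ ^ 2 + 2 * ⟪x, p⟫ + ‖p‖ ^ 2 := by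
    rw [show x + u = x + (u - p) + p by abel, norm_add_sq_real, inner_add_left,
      real_inner_comm p (u - p), horth]
    ring
  rw [← exp_add, exp_le_exp, hsplit]
  linarith [hp x hx]

end GaussianCone

section Euclidean

variable {n : ℕ}

lemma isClosed_normalCone (Q : Set (EuclideanSpace ℝ (Fin n))) (z : EuclideanSpace ℝ (Fin n)) :
    IsClosed (normalCone Q z) := by
  simp only [normalCone, Set.ofPred_forall]
  exact isClosed_biInter fun y _ => isClosed_le (by fun_prop) continuous_const

lemma add_mem_normalCone {Q : Set (EuclideanSpace ℝ (Fin n))} {z v w : EuclideanSpace ℝ (Fin n)}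
    (hv : v ∈ normalCone Q z) (hw : w ∈ normalCone Q z) : v + w ∈ normalCone Q z :=
  fun y hy => by rw [inner_add_left]; linarith [hv y hy, hw y hy]

lemma smul_mem_normalCone {Q : Set (EuclideanSpace ℝ (Fin n))} {z : EuclideanSpace ℝ (Fin n)}
    (t : ℝ) (ht : 0 < t) (v : EuclideanSpace ℝ (Fin n)) (hv : v ∈ normalCone Q z) :
    t • v ∈ normalCone Q z :=
  fun y hy => by rw [inner_smul_left]; exact mul_nonpos_of_nonneg_of_nonpos ht.le (hv y hy)

lemma gauss_eq_mul_setIntegral (B : Set (EuclideanSpace ℝ (Fin n))) :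
    gauss B = (2 * π) ^ (-(n : ℝ) / 2) * ∫ x in B, exp (-‖x‖ ^ 2 / 2) :=
  integral_const_mul _ _

lemma gauss_nonneg (B : Set (EuclideanSpace ℝ (Fin n))) : 0 ≤ gauss B :=
  integral_nonneg fun _ => by positivity

lemma gauss_mono {B B' : Set (EuclideanSpace ℝ (Fin n))} (h : B ⊆ B') : gauss B ≤ gauss B' :=
  setIntegral_mono_set (integrable_exp_neg_sq_norm.const_mul _).integrableOn
    (.of_forall fun _ => by positivity) h.eventuallyLE

lemma gauss_image_add_right (B : Set (EuclideanSpace ℝ (Fin n))) (w : EuclideanSpace ℝ (Fin n)) :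
    gauss ((· + w) '' B) = (2 * π) ^ (-(n : ℝ) / 2) * ∫ x in B, exp (-‖x + w‖ ^ 2 / 2) := by
  rw [gauss_eq_mul_setIntegral, (measurePreserving_add_right volume w).setIntegral_image_emb
    (MeasurableEquiv.addRight w).measurableEmbedding]

variable {T : Set (EuclideanSpace ℝ (Fin n))}

lemma gauss_mul_exp_le_gauss_image_add_right (hTm : MeasurableSet T)
    (hT : ∀ t : ℝ, 0 < t → ∀ x ∈ T, t • x ∈ T) (w : EuclideanSpace ℝ (Fin n)) :
    gauss T * exp (-‖w‖ ^ 2 / 2 - ‖w‖ * √n) ≤ gauss ((· + w) '' T) := by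
  rw [gauss_eq_mul_setIntegral, gauss_image_add_right, mul_assoc, mul_comm (∫ _ in T, _)]
  gcongr
  simpa using exp_mul_setIntegral_le_setIntegral_exp_neg_sq_norm_add hTm hT w

lemma gauss_image_add_right_le (hTm : MeasurableSet T)
    (hT : ∀ t : ℝ, 0 < t → ∀ x ∈ T, t • x ∈ T) {p u : EuclideanSpace ℝ (Fin n)}
    (hp : p ∈ dualCone T) (horth : ⟪p, u - p⟫ = 0) :
    gauss ((· + u) '' T) ≤ gauss T * exp (-‖p‖ ^ 2 / 2 + ‖u - p‖ * √n) := by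
  rw [gauss_image_add_right, gauss_eq_mul_setIntegral, mul_assoc, exp_add]
  gcongr
  calc ∫ x in T, exp (-‖x + u‖ ^ 2 / 2)
      ≤ exp (-‖p‖ ^ 2 / 2) * ∫ x in T, exp (-‖x + (u - p)‖ ^ 2 / 2) :=
        setIntegral_exp_neg_sq_norm_add_le_of_inner_eq_zero hTm hp horth
    _ ≤ exp (-‖p‖ ^ 2 / 2) * (exp (‖u - p‖ * √n) * ∫ x in T, exp (-‖x‖ ^ 2 / 2)) := by
        gcongr
        simpa using setIntegral_exp_neg_sq_norm_add_le hTm hT (u - p)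
    _ = _ := by ring

end Euclidean

theorem stmt7_general {n : ℕ}
    (Q : Set (EuclideanSpace ℝ (Fin n)))
    (z : EuclideanSpace ℝ (Fin n))
    (D : Set (EuclideanSpace ℝ (Fin n))) (ψ : EuclideanSpace ℝ (Fin n) → ℝ)
    (ε : ℝ) :
    (∀ w ∈ subdiffScaled ε D ψ z ∩ normalCone Q z,
      gauss (normalCone Q z) * Real.exp (-‖w‖ ^ 2 / 2 - ‖w‖ * Real.sqrt n) ≤
        gauss (normalCone Q z ∩ (normalCone Q z + subdiffScaled ε D ψ z))) ∧
    (∀ v : EuclideanSpace ℝ (Fin n), HasGradientAt ψ v z →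
      ∀ p : EuclideanSpace ℝ (Fin n), p ∈ dualCone (normalCone Q z) →
        (∀ a ∈ dualCone (normalCone Q z), dist (ε • v) p ≤ dist (ε • v) a) →
      gauss (normalCone Q z ∩ ((· + ε • v) '' normalCone Q z)) ≤
        gauss (normalCone Q z) *
          Real.exp (-‖p‖ ^ 2 / 2 +
            infDist (ε • v) (dualCone (normalCone Q z)) * Real.sqrt n)) := by
  have hTm : MeasurableSet (normalCone Q z) := (isClosed_normalCone Q z).measurableSet
  refine ⟨fun w ⟨hwS, hwT⟩ => ?_, fun v _ p hp hmin => ?_⟩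
  · calc _ ≤ gauss ((· + w) '' normalCone Q z) :=
          gauss_mul_exp_le_gauss_image_add_right hTm smul_mem_normalCone w
      _ ≤ _ := gauss_mono <| by
          rintro _ ⟨y, hy, rfl⟩
          exact ⟨add_mem_normalCone hy hwT, Set.add_mem_add hy hwS⟩
  · have horth : ⟪p, ε • v - p⟫ = 0 :=
      (ProperCone.innerDual (normalCone Q z) : PointedCone ℝ _).inner_sub_eq_zero_of_forall_dist_le
        hp hmin
    have hdist : ‖ε • v - p‖ ≤ infDist (ε • v) (dualCone (normalCone Q z)) :=
      dist_eq_norm (ε • v) p ▸ (le_infDist ⟨p, hp⟩).2 hmin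
    calc _ ≤ gauss ((· + ε • v) '' normalCone Q z) := gauss_mono Set.inter_subset_right
      _ ≤ gauss (normalCone Q z) * exp (-‖p‖ ^ 2 / 2 + ‖ε • v - p‖ * √n) :=
          gauss_image_add_right_le hTm smul_mem_normalCone hp horth
      _ ≤ _ := by
          gcongr
          exact gauss_nonneg _

/-- Gaussian measure of an inner cone under the membership condition. -/
theorem stmt7 {n m : ℕ} (A : Fin m → EuclideanSpace ℝ (Fin n)) (b : Fin m → ℝ)
    (Q : Set (EuclideanSpace ℝ (Fin n)))
    (hQ : Q = {x | ∀ i, ⟪A i, x⟫ ≤ b i}) (hne : Q.Nonempty)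
    (z : EuclideanSpace ℝ (Fin n)) (hz : z ∈ Set.extremePoints ℝ Q)
    (D : Set (EuclideanSpace ℝ (Fin n))) (ψ : EuclideanSpace ℝ (Fin n) → ℝ)
    (hDne : D.Nonempty) (hψ : ConvexOn ℝ D ψ)
    (ε : ℝ) (hε : 0 ≤ ε) :
    (∀ w ∈ subdiffScaled ε D ψ z ∩ normalCone Q z,
      gauss (normalCone Q z) * Real.exp (-‖w‖ ^ 2 / 2 - ‖w‖ * Real.sqrt n) ≤
        gauss (normalCone Q z ∩ (normalCone Q z + subdiffScaled ε D ψ z))) ∧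
    (∀ v : EuclideanSpace ℝ (Fin n), HasGradientAt ψ v z →
      ∀ p : EuclideanSpace ℝ (Fin n), p ∈ dualCone (normalCone Q z) →
        (∀ a ∈ dualCone (normalCone Q z), dist (ε • v) p ≤ dist (ε • v) a) →
      gauss (normalCone Q z ∩ ((· + ε • v) '' normalCone Q z)) ≤
        gauss (normalCone Q z) *
          Real.exp (-‖p‖ ^ 2 / 2 +
            infDist (ε • v) (dualCone (normalCone Q z)) * Real.sqrt n)) :=
  stmt7_general Q z D ψ ε
end
end

section
/- Let s¹, …, s^ℓ ∈ ℝⁿ be unit vectors, T = {y ∈ ℝⁿ : sⁱ·y ≥ 0 for all i ∈ [ℓ]}, and S ∈ ℝ^{ℓ×n} the matrix with rows s¹, …, s^ℓ. Let w ∈ ℝⁿ and suppose w̃ ∈ ℝⁿ satisfies S w̃ = (Sw)₊ (componentwise positive part). Then the margins coincide: M(T, w) = M(T, w̃), i.e., T \ (T + w) = T \ (T + w̃). -/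
open Set RealInnerProductSpace

noncomputable section

/-- Representer vectors give the same margin. -/
theorem stmt10 {n ℓ : ℕ} (s : Fin ℓ → EuclideanSpace ℝ (Fin n))
    (hs : ∀ i, ‖s i‖ = 1)
    (T : Set (EuclideanSpace ℝ (Fin n)))
    (hT : T = {y | ∀ i, 0 ≤ ⟪s i, y⟫})
    (w wt : EuclideanSpace ℝ (Fin n))
    (hwt : ∀ i, ⟪s i, wt⟫ = max ⟪s i, w⟫ 0) :
    T \ ((· + w) '' T) = T \ ((· + wt) '' T) := by
  subst hT
  ext x
  simp only [mem_diff, mem_setOf_eq, mem_image]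
  have himg : ∀ v : EuclideanSpace ℝ (Fin n),
      (∃ y, (∀ i, 0 ≤ ⟪s i, y⟫) ∧ y + v = x) ↔ ∀ i, ⟪s i, v⟫ ≤ ⟪s i, x⟫ := by
    intro v
    constructor
    · rintro ⟨y, hy, rfl⟩ i
      have := hy i
      rw [inner_add_right]
      linarith
    · intro h
      exact ⟨x - v, fun i => by rw [inner_sub_right]; linarith [h i], by abel⟩
  constructor
  · rintro ⟨hx, hnot⟩
    refine ⟨hx, fun hc => hnot ?_⟩
    rw [himg] at hc ⊢
    intro i
    have := hc i
    rw [hwt i] at this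
    exact le_trans (le_max_left _ _) this
  · rintro ⟨hx, hnot⟩
    refine ⟨hx, fun hc => hnot ?_⟩
    rw [himg] at hc ⊢
    intro i
    rw [hwt i]
    exact max_le (hc i) (hx i)
end
end
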